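/- (Orthogonality of eigenfunctions, continuous ABR case) Let 0 < α < 1, p, q, r : [a,b] → ℝ continuous with p > 0 and r > 0. Let λ₁ ≠ λ₂ be real numbers and x₁, x₂ real-valued functions satisfying ^{ABR}_a D^α (p · ^{ABR}D_b^α xᵢ) + q xᵢ = λᵢ r xᵢ on (a,b), i = 1,2, with enough regularity for the ABR integration by parts formula. Then ∫_a^b r(t) x₁(t) x₂(t) dt = 0. -/

import Mathlib

open intervalIntegral

/-- One-parameter Mittag-Leffler function. -/
noncomputable def mittagLeffler (α z : ℝ) : ℝ :=
  ∑' k : ℕ, z ^ k / Real.Gamma (α * k + 1)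

/-- Left ABR fractional derivative with Mittag-Leffler kernel. -/
noncomputable def ABRleft (B α a : ℝ) (f : ℝ → ℝ) (t : ℝ) : ℝ :=
  (B / (1 - α)) *
    deriv (fun x => ∫ s in a..x, f s * mittagLeffler α (-(α / (1 - α)) * (x - s) ^ α)) t

/-- Right ABR fractional derivative with Mittag-Leffler kernel. -/
noncomputable def ABRright (B α b : ℝ) (f : ℝ → ℝ) (t : ℝ) : ℝ :=
  -(B / (1 - α)) *
    deriv (fun x => ∫ s in x..b, f s * mittagLeffler α (-(α / (1 - α)) * (s - x) ^ α)) t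

/-- The fractional Sturm–Liouville operator `L₁`. -/
noncomputable def SLop (B α a b : ℝ) (p q : ℝ → ℝ) (x : ℝ → ℝ) (t : ℝ) : ℝ :=
  ABRleft B α a (fun s => p s * ABRright B α b x s) t + q t * x t

/-!
Integrating the eigenvalue equation of `xᵢ` against `xⱼ` and using integration by parts
turns both `λ₁ ∫ r x₁ x₂ - ∫ q x₁ x₂` and `λ₂ ∫ r x₁ x₂ - ∫ q x₁ x₂` into the same
symmetric integral `∫ p · D_b^α x₁ · D_b^α x₂`; since `λ₁ ≠ λ₂`, this forces
`∫ r x₁ x₂ = 0`.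
-/

open MeasureTheory Set

theorem IntervalIntegrable.mul_of_mul_of_ne_zero {μ : Measure ℝ} {a b : ℝ} {f g h : ℝ → ℝ}
    (hfh : IntervalIntegrable (fun t => f t * h t) μ a b)
    (hf : ContinuousOn f (uIcc a b)) (hg : ContinuousOn g (uIcc a b))
    (hf₀ : ∀ t ∈ uIcc a b, f t ≠ 0) :
    IntervalIntegrable (fun t => g t * h t) μ a b := by
  refine (hfh.mul_continuousOn (hg.div hf hf₀)).congr fun t ht => ?_
  have hft := hf₀ t (uIoc_subset_uIcc ht)
  simp only [Pi.div_apply]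
  field_simp

theorem integral_mul_ABRleft_of_SLop_eq {B α a b lam : ℝ} {p q r x y : ℝ → ℝ}
    (hab : a ≤ b)
    (heq : ∀ t ∈ Ioo a b, SLop B α a b p q x t = lam * r t * x t)
    (hr : IntervalIntegrable (fun t => r t * x t * y t) volume a b)
    (hq : IntervalIntegrable (fun t => q t * x t * y t) volume a b) :
    (∫ t in a..b, y t * ABRleft B α a (fun s => p s * ABRright B α b x s) t)
      = lam * (∫ t in a..b, r t * x t * y t) - ∫ t in a..b, q t * x t * y t := by
  rw [← intervalIntegral.integral_const_mul,
    ← intervalIntegral.integral_sub (hr.const_mul lam) hq]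
  refine integral_congr_Ioo_of_le hab fun t ht => ?_
  have h := heq t ht
  rw [SLop] at h
  linear_combination y t * h

theorem SL_eigenfunctions_orthogonal_general (a b α B : ℝ) (hab : a < b)
    (p q r : ℝ → ℝ) (hq : ContinuousOn q (Set.Icc a b))
    (hr : ContinuousOn r (Set.Icc a b))
    (hrpos : ∀ t ∈ Set.Icc a b, 0 < r t)
    (lam₁ lam₂ : ℝ) (hlam : lam₁ ≠ lam₂) (x₁ x₂ : ℝ → ℝ)
    (heq₁ : ∀ t ∈ Set.Ioo a b, SLop B α a b p q x₁ t = lam₁ * r t * x₁ t)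
    (heq₂ : ∀ t ∈ Set.Ioo a b, SLop B α a b p q x₂ t = lam₂ * r t * x₂ t)
    (h12 : (∫ t in a..b, x₂ t * ABRleft B α a (fun s => p s * ABRright B α b x₁ s) t)
          = ∫ t in a..b, (p t * ABRright B α b x₁ t) * ABRright B α b x₂ t)
    (h21 : (∫ t in a..b, x₁ t * ABRleft B α a (fun s => p s * ABRright B α b x₂ s) t)
          = ∫ t in a..b, (p t * ABRright B α b x₂ t) * ABRright B α b x₁ t) :
    (∫ t in a..b, r t * x₁ t * x₂ t) = 0 := by
  by_cases hR : IntervalIntegrable (fun t => r t * x₁ t * x₂ t) volume a b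
  swap
  -- otherwise the integral is `0` by convention
  · exact integral_undef hR
  rw [← uIcc_of_le hab.le] at hq hr hrpos
  have hQ : IntervalIntegrable (fun t => q t * x₁ t * x₂ t) volume a b := by
    simp only [mul_assoc] at hR ⊢
    exact hR.mul_of_mul_of_ne_zero hr hq fun t ht => (hrpos t ht).ne'
  have hswap (f : ℝ → ℝ) : (fun t => f t * x₂ t * x₁ t) = fun t => f t * x₁ t * x₂ t :=
    funext fun t => mul_right_comm _ _ _
  have e₁ := integral_mul_ABRleft_of_SLop_eq hab.le heq₁ hR hQ
  have e₂ := integral_mul_ABRleft_of_SLop_eq hab.le heq₂ (by rwa [hswap]) (by rwa [hswap])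
  rw [hswap r, hswap q] at e₂
  set I := ∫ t in a..b, r t * x₁ t * x₂ t
  set J := ∫ t in a..b, q t * x₁ t * x₂ t
  have hsym : lam₁ * I - J = lam₂ * I - J := by
    rw [← e₁, ← e₂, h12, h21]
    exact integral_congr fun t _ => mul_right_comm _ _ _
  by_contra hI
  exact hlam (mul_right_cancel₀ hI (sub_left_injective hsym))

/-- Orthogonality of eigenfunctions corresponding to distinct eigenvalues for the
continuous ABR fractional Sturm–Liouville equation; regularity is encoded in the
integration by parts hypotheses `h12`, `h21`. -/
theorem SL_eigenfunctions_orthogonal (a b α B : ℝ) (hab : a < b)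
    (hα0 : 0 < α) (hα1 : α < 1) (hB : 0 < B)
    (p q r : ℝ → ℝ) (hp : ContinuousOn p (Set.Icc a b)) (hq : ContinuousOn q (Set.Icc a b))
    (hr : ContinuousOn r (Set.Icc a b))
    (hppos : ∀ t ∈ Set.Icc a b, 0 < p t) (hrpos : ∀ t ∈ Set.Icc a b, 0 < r t)
    (lam₁ lam₂ : ℝ) (hlam : lam₁ ≠ lam₂) (x₁ x₂ : ℝ → ℝ)
    (heq₁ : ∀ t ∈ Set.Ioo a b, SLop B α a b p q x₁ t = lam₁ * r t * x₁ t)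
    (heq₂ : ∀ t ∈ Set.Ioo a b, SLop B α a b p q x₂ t = lam₂ * r t * x₂ t)
    (h12 : (∫ t in a..b, x₂ t * ABRleft B α a (fun s => p s * ABRright B α b x₁ s) t)
          = ∫ t in a..b, (p t * ABRright B α b x₁ t) * ABRright B α b x₂ t)
    (h21 : (∫ t in a..b, x₁ t * ABRleft B α a (fun s => p s * ABRright B α b x₂ s) t)
          = ∫ t in a..b, (p t * ABRright B α b x₂ t) * ABRright B α b x₁ t) :
    (∫ t in a..b, r t * x₁ t * x₂ t) = 0 :=
  SL_eigenfunctions_orthogonal_general a b α B hab p q r hq hr hrpos lam₁ lam₂ hlam x₁ x₂ heq₁ heq₂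
    h12 h21
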